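/- For every m ≥ 0, the limit V_m := lim_{R→∞} ( Vol_m(R) − Vol₀(R) ) exists and is a finite real number (the renormalized volume of Schwarzschild–anti-deSitter of mass m), and V_0 = 0. -/

import Mathlib

/-! The two integrands differ by `2 m s / (A B (A + B))`, where `A` and `B` are the two square
roots, and both roots are at least `s` on `[2m, ∞)`; so the difference is `O(m / s²)` and hence
integrable at infinity. The renormalized volume is `4π` times its integral over `(2m, ∞)`
minus the hyperbolic volume of the ball of radius `2m`. -/

open Real MeasureTheory Filter

/-- Volume of the centered coordinate ball of radius `R` in hyperbolic space. -/
noncomputable def hypVol (R : ℝ) : ℝ :=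
  4 * π * ∫ s in (0:ℝ)..R, s ^ 2 / Real.sqrt (1 + s ^ 2)

/-- Volume of the centered coordinate ball of radius `R` in
Schwarzschild-anti-deSitter of mass `m`. -/
noncomputable def sAdSVol (m R : ℝ) : ℝ :=
  4 * π * ∫ s in (2 * m)..R, s ^ 2 / Real.sqrt (1 + s ^ 2 - 2 * m / s)

open Set Topology

theorem tendsto_intervalIntegral_sub_intervalIntegral_atTop {f h : ℝ → ℝ} {a : ℝ} (b : ℝ)
    (hh : Continuous h) (hfh : IntegrableOn (fun s => f s - h s) (Ioi a)) :
    Tendsto (fun R => (∫ s in a..R, f s) - ∫ s in b..R, h s) atTop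
      (𝓝 ((∫ s in Ioi a, f s - h s) - ∫ s in b..a, h s)) := by
  refine ((intervalIntegral_tendsto_integral_Ioi a hfh tendsto_id).sub_const _).congr' ?_
  filter_upwards [eventually_ge_atTop a] with R hR
  have hf : IntervalIntegrable f volume a R := by
    rw [intervalIntegrable_iff_integrableOn_Ioc_of_le hR]
    exact ((hfh.mono_set Ioc_subset_Ioi_self).add hh.integrableOn_Ioc).congr_fun
      (fun s _ => sub_add_cancel (f s) (h s)) measurableSet_Ioc
  rw [id, intervalIntegral.integral_sub hf (hh.intervalIntegrable a R),
    ← intervalIntegral.integral_add_adjacent_intervals (hh.intervalIntegrable b a)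
      (hh.intervalIntegrable a R)]
  ring

theorem continuous_sq_div_sqrt_one_add_sq : Continuous fun s : ℝ => s ^ 2 / √(1 + s ^ 2) :=
  .div (by fun_prop) (by fun_prop) fun s => by positivity

theorem sq_le_sAdS_radicand {m s : ℝ} (hm : 0 < m) (hs : 2 * m ≤ s) :
    s ^ 2 ≤ 1 + s ^ 2 - 2 * m / s := by
  have : 2 * m / s ≤ 1 := (div_le_one (by linarith)).mpr hs
  linarith

theorem sAdS_integrand_sub_eq {m s : ℝ} (hm : 0 < m) (hs : 2 * m ≤ s) :
    s ^ 2 / √(1 + s ^ 2 - 2 * m / s) - s ^ 2 / √(1 + s ^ 2)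
      = 2 * m * s / (√(1 + s ^ 2 - 2 * m / s) * √(1 + s ^ 2) *
          (√(1 + s ^ 2 - 2 * m / s) + √(1 + s ^ 2))) := by
  have hs0 : 0 < s := by linarith
  have hrad : 0 < 1 + s ^ 2 - 2 * m / s := by
    linarith [sq_le_sAdS_radicand hm hs, pow_pos hs0 2]
  set A := √(1 + s ^ 2 - 2 * m / s)
  set B := √(1 + s ^ 2)
  have hApos : 0 < A := sqrt_pos.mpr hrad
  have hBpos : 0 < B := sqrt_pos.mpr (by positivity)
  have hAB : s * B ^ 2 - s * A ^ 2 = 2 * m := by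
    rw [sq_sqrt hrad.le, sq_sqrt (by positivity)]
    field_simp
    ring
  rw [div_sub_div _ _ hApos.ne' hBpos.ne', div_eq_div_iff (by positivity) (by positivity)]
  linear_combination (s * A * B) * hAB

theorem sAdS_integrand_sub_nonneg {m s : ℝ} (hm : 0 < m) (hs : 2 * m ≤ s) :
    0 ≤ s ^ 2 / √(1 + s ^ 2 - 2 * m / s) - s ^ 2 / √(1 + s ^ 2) := by
  rw [sAdS_integrand_sub_eq hm hs]
  have : 0 < s := by linarith
  positivity

theorem sAdS_integrand_sub_le {m s : ℝ} (hm : 0 < m) (hs : 2 * m ≤ s) :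
    s ^ 2 / √(1 + s ^ 2 - 2 * m / s) - s ^ 2 / √(1 + s ^ 2) ≤ m / s ^ 2 := by
  have hs0 : 0 < s := by linarith
  have hA : s ≤ √(1 + s ^ 2 - 2 * m / s) := (le_sqrt' hs0).mpr (sq_le_sAdS_radicand hm hs)
  have hB : s ≤ √(1 + s ^ 2) := (le_sqrt' hs0).mpr (by linarith)
  calc _ = 2 * m * s / (√(1 + s ^ 2 - 2 * m / s) * √(1 + s ^ 2) *
          (√(1 + s ^ 2 - 2 * m / s) + √(1 + s ^ 2))) := sAdS_integrand_sub_eq hm hs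
    _ ≤ 2 * m * s / (s * s * (s + s)) := by gcongr
    _ = m / s ^ 2 := by field_simp; ring

theorem integrableOn_sAdS_integrand_sub {m : ℝ} (hm : 0 ≤ m) :
    IntegrableOn (fun s => s ^ 2 / √(1 + s ^ 2 - 2 * m / s) - s ^ 2 / √(1 + s ^ 2))
      (Ioi (2 * m)) := by
  rcases hm.eq_or_lt with rfl | hm
  · simp
  have hdom : IntegrableOn (fun s : ℝ => m / s ^ 2) (Ioi (2 * m)) := by
    refine IntegrableOn.congr_fun ((integrableOn_Ioi_rpow_of_lt (by norm_num : (-2 : ℝ) < -1)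
      (by linarith : 0 < 2 * m)).const_mul m) (fun s _ => ?_) measurableSet_Ioi
    simp [div_eq_mul_inv]
  refine hdom.mono' (by fun_prop) ?_
  filter_upwards [ae_restrict_mem measurableSet_Ioi] with s hs
  rw [norm_of_nonneg (sAdS_integrand_sub_nonneg hm hs.le)]
  exact sAdS_integrand_sub_le hm hs.le

theorem renormalized_volume_exists :
    (∀ m : ℝ, 0 ≤ m → ∃ V : ℝ,
        Tendsto (fun R => sAdSVol m R - hypVol R) atTop (nhds V))
    ∧ Tendsto (fun R => sAdSVol 0 R - hypVol R) atTop (nhds 0) := by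
  refine ⟨fun m hm => ?_, by simp [sAdSVol, hypVol]⟩
  have hlim := tendsto_intervalIntegral_sub_intervalIntegral_atTop 0
    continuous_sq_div_sqrt_one_add_sq (integrableOn_sAdS_integrand_sub hm)
  exact ⟨_, by simpa only [sAdSVol, hypVol, ← mul_sub] using hlim.const_mul (4 * π)⟩
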